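/- In the equitable algebra U, for all 1 ≤ i, j ≤ n one has X_i(1 - X_jZ_j) = q_i^{A_ij}(1 - X_jZ_j)X_i, and for 1 ≤ i ≤ n and every integer m ≥ 0 one has (1 - X_iZ_i)^m = Σ_{r=0}^{m} (-1)^r [m choose r]_i q_i^{r(1-m)} X_i^r Z_i^r. -/

import Mathlib

open FreeAlgebra
open scoped TensorProduct

noncomputable section

/-- The field `𝕂(q)` of rational functions in the indeterminate `q` over `𝕂`. -/
abbrev Kq (K : Type) [Field K] : Type := RatFunc K

/-- The indeterminate `q` viewed as an element of `𝕂(q)`. -/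
def qv (K : Type) [Field K] : Kq K := RatFunc.X

/-- `q_i = q^{d_i}`, given the exponent `di = d_i`. -/
def qi (K : Type) [Field K] (di : ℕ) : Kq K := qv K ^ di

/-- The quantum integer `[m]_i = (q_i^m - q_i^{-m})/(q_i - q_i⁻¹)`. -/
def qnum (K : Type) [Field K] (di : ℕ) (m : ℤ) : Kq K :=
  (qi K di ^ m - qi K di ^ (-m)) / (qi K di - (qi K di)⁻¹)

/-- The quantum factorial `[m]_i! = [m]_i [m-1]_i ⋯ [1]_i`, with `[0]_i! = 1`. -/
def qfac (K : Type) [Field K] (di : ℕ) : ℕ → Kq K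
  | 0 => 1
  | m + 1 => qnum K di (m + 1) * qfac K di m

/-- The Gaussian binomial coefficient `[m choose r]_i = [m]_i!/([r]_i![m-r]_i!)`. -/
def qbin (K : Type) [Field K] (di m r : ℕ) : Kq K :=
  qfac K di m / (qfac K di r * qfac K di (m - r))

/-- Chevalley generators `E_i, F_i, K_i, K_i⁻¹` of `U_q(g)`. -/
inductive CGen (n : ℕ) : Type
  | E : Fin n → CGen n
  | F : Fin n → CGen n
  | K : Fin n → CGen n
  | Kinv : Fin n → CGen n

/-- The defining relations (R1)–(R7) of `U_q(g)` in the Chevalley presentation. -/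
inductive CRel (K : Type) [Field K] {n : ℕ} (A : Matrix (Fin n) (Fin n) ℤ) (d : Fin n → ℕ) :
    FreeAlgebra (Kq K) (CGen n) → FreeAlgebra (Kq K) (CGen n) → Prop
  | R1a (i : Fin n) : CRel K A d (ι (Kq K) (CGen.K i) * ι (Kq K) (CGen.Kinv i)) 1
  | R1b (i : Fin n) : CRel K A d (ι (Kq K) (CGen.Kinv i) * ι (Kq K) (CGen.K i)) 1
  | R2 (i j : Fin n) : CRel K A d (ι (Kq K) (CGen.K i) * ι (Kq K) (CGen.K j))
      (ι (Kq K) (CGen.K j) * ι (Kq K) (CGen.K i))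
  | R3 (i j : Fin n) : CRel K A d
      (ι (Kq K) (CGen.K i) * ι (Kq K) (CGen.E j) * ι (Kq K) (CGen.Kinv i))
      (qi K (d i) ^ (A i j) • ι (Kq K) (CGen.E j))
  | R4 (i j : Fin n) : CRel K A d
      (ι (Kq K) (CGen.K i) * ι (Kq K) (CGen.F j) * ι (Kq K) (CGen.Kinv i))
      (qi K (d i) ^ (-(A i j)) • ι (Kq K) (CGen.F j))
  | R5 (i j : Fin n) : CRel K A d
      (ι (Kq K) (CGen.E i) * ι (Kq K) (CGen.F j) - ι (Kq K) (CGen.F j) * ι (Kq K) (CGen.E i))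
      (if i = j then (qi K (d i) - (qi K (d i))⁻¹)⁻¹ •
        (ι (Kq K) (CGen.K i) - ι (Kq K) (CGen.Kinv i)) else 0)
  | R6 (i j : Fin n) (hij : i ≠ j) : CRel K A d
      (∑ r ∈ Finset.range ((1 - A i j).toNat + 1),
        ((-1 : Kq K) ^ r * qbin K (d i) (1 - A i j).toNat r) •
          (ι (Kq K) (CGen.E i) ^ ((1 - A i j).toNat - r) * ι (Kq K) (CGen.E j) *
            ι (Kq K) (CGen.E i) ^ r)) 0
  | R7 (i j : Fin n) (hij : i ≠ j) : CRel K A d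
      (∑ r ∈ Finset.range ((1 - A i j).toNat + 1),
        ((-1 : Kq K) ^ r * qbin K (d i) (1 - A i j).toNat r) •
          (ι (Kq K) (CGen.F i) ^ ((1 - A i j).toNat - r) * ι (Kq K) (CGen.F j) *
            ι (Kq K) (CGen.F i) ^ r)) 0

/-- The quantum group `U_q(g)` presented by generators and relations (R1)–(R7). -/
abbrev Uqg (K : Type) [Field K] {n : ℕ} (A : Matrix (Fin n) (Fin n) ℤ) (d : Fin n → ℕ) :=
  RingQuot (CRel K A d)

variable (K : Type) [Field K] {n : ℕ} (A : Matrix (Fin n) (Fin n) ℤ) (d : Fin n → ℕ)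

def genE (i : Fin n) : Uqg K A d := RingQuot.mkAlgHom (Kq K) (CRel K A d) (ι (Kq K) (CGen.E i))
def genF (i : Fin n) : Uqg K A d := RingQuot.mkAlgHom (Kq K) (CRel K A d) (ι (Kq K) (CGen.F i))
def genK (i : Fin n) : Uqg K A d := RingQuot.mkAlgHom (Kq K) (CRel K A d) (ι (Kq K) (CGen.K i))
def genKinv (i : Fin n) : Uqg K A d :=
  RingQuot.mkAlgHom (Kq K) (CRel K A d) (ι (Kq K) (CGen.Kinv i))

/-- Equitable generators `X_i, X_i⁻¹, Y_i, Z_i`. -/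
inductive EGen (n : ℕ) : Type
  | X : Fin n → EGen n
  | Xinv : Fin n → EGen n
  | Y : Fin n → EGen n
  | Z : Fin n → EGen n

/-- The defining relations (E1)–(E8) of the equitable presentation. -/
inductive ERel (K : Type) [Field K] {n : ℕ} (A : Matrix (Fin n) (Fin n) ℤ) (d : Fin n → ℕ) :
    FreeAlgebra (Kq K) (EGen n) → FreeAlgebra (Kq K) (EGen n) → Prop
  | E1a (i : Fin n) : ERel K A d (ι (Kq K) (EGen.X i) * ι (Kq K) (EGen.Xinv i)) 1
  | E1b (i : Fin n) : ERel K A d (ι (Kq K) (EGen.Xinv i) * ι (Kq K) (EGen.X i)) 1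
  | E2 (i j : Fin n) : ERel K A d (ι (Kq K) (EGen.X i) * ι (Kq K) (EGen.X j))
      (ι (Kq K) (EGen.X j) * ι (Kq K) (EGen.X i))
  | E3 (i j : Fin n) : ERel K A d
      (ι (Kq K) (EGen.Y i) * ι (Kq K) (EGen.X j) -
        qi K (d i) ^ (A i j) • (ι (Kq K) (EGen.X j) * ι (Kq K) (EGen.Y i)))
      ((1 - qi K (d i) ^ (A i j)) • (ι (Kq K) (EGen.Xinv i) * ι (Kq K) (EGen.X j)))
  | E4 (i j : Fin n) : ERel K A d
      (ι (Kq K) (EGen.X i) * ι (Kq K) (EGen.Z j) -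
        qi K (d i) ^ (A i j) • (ι (Kq K) (EGen.Z j) * ι (Kq K) (EGen.X i)))
      ((1 - qi K (d i) ^ (A i j)) • (ι (Kq K) (EGen.X i) * ι (Kq K) (EGen.Xinv j)))
  | E5 (i : Fin n) : ERel K A d
      (ι (Kq K) (EGen.Z i) * ι (Kq K) (EGen.Y i) -
        (qi K (d i) ^ 2) • (ι (Kq K) (EGen.Y i) * ι (Kq K) (EGen.Z i)))
      ((1 - qi K (d i) ^ 2) • 1)
  | E6 (i j : Fin n) (hij : i ≠ j) : ERel K A d
      (ι (Kq K) (EGen.Z i) * ι (Kq K) (EGen.Y j) -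
        qi K (d i) ^ (A i j) • (ι (Kq K) (EGen.Y j) * ι (Kq K) (EGen.Z i)))
      ((1 - qi K (d i) ^ (A i j)) • (ι (Kq K) (EGen.Xinv i) * ι (Kq K) (EGen.Xinv j)))
  | E7 (i j : Fin n) (hij : i ≠ j) : ERel K A d
      (∑ r ∈ Finset.range ((1 - A i j).toNat + 1),
        ((-1 : Kq K) ^ r * qbin K (d i) (1 - A i j).toNat r) •
          (ι (Kq K) (EGen.Y i) ^ ((1 - A i j).toNat - r) * ι (Kq K) (EGen.Y j) *
            ι (Kq K) (EGen.Y i) ^ r))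
      ((∏ s ∈ Finset.range ((-(A i j)).toNat + 1), (1 - qi K (d i) ^ (A i j + 2 * (s : ℤ)))) •
        (ι (Kq K) (EGen.Xinv i) ^ (1 - A i j).toNat * ι (Kq K) (EGen.Xinv j)))
  | E8 (i j : Fin n) (hij : i ≠ j) : ERel K A d
      (∑ r ∈ Finset.range ((1 - A i j).toNat + 1),
        ((-1 : Kq K) ^ r * qbin K (d i) (1 - A i j).toNat r) •
          (ι (Kq K) (EGen.Z i) ^ ((1 - A i j).toNat - r) * ι (Kq K) (EGen.Z j) *
            ι (Kq K) (EGen.Z i) ^ r))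
      ((∏ s ∈ Finset.range ((-(A i j)).toNat + 1), (1 - qi K (d i) ^ (A i j + 2 * (s : ℤ)))) •
        (ι (Kq K) (EGen.Xinv i) ^ (1 - A i j).toNat * ι (Kq K) (EGen.Xinv j)))

/-- The equitable algebra `U` presented by generators and relations (E1)–(E8). -/
abbrev Ueqg (K : Type) [Field K] {n : ℕ} (A : Matrix (Fin n) (Fin n) ℤ) (d : Fin n → ℕ) :=
  RingQuot (ERel K A d)

def genX (i : Fin n) : Ueqg K A d := RingQuot.mkAlgHom (Kq K) (ERel K A d) (ι (Kq K) (EGen.X i))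
def genXinv (i : Fin n) : Ueqg K A d :=
  RingQuot.mkAlgHom (Kq K) (ERel K A d) (ι (Kq K) (EGen.Xinv i))
def genY (i : Fin n) : Ueqg K A d := RingQuot.mkAlgHom (Kq K) (ERel K A d) (ι (Kq K) (EGen.Y i))
def genZ (i : Fin n) : Ueqg K A d := RingQuot.mkAlgHom (Kq K) (ERel K A d) (ι (Kq K) (EGen.Z i))

/-- `A` is a symmetrizable generalized Cartan matrix with symmetrizing positive,
relatively prime integers `d_i`, and `n ≥ 1`. -/
def IsSymmetrizableGCM {n : ℕ} (A : Matrix (Fin n) (Fin n) ℤ) (d : Fin n → ℕ) : Prop :=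
  0 < n ∧ (∀ i, A i i = 2) ∧ (∀ i j, i ≠ j → A i j ≤ 0) ∧
    (∀ i, 0 < d i) ∧ Finset.univ.gcd d = 1 ∧
    (∀ i j, (d i : ℤ) * A i j = (d j : ℤ) * A j i)

end

/-!
Relation (E4) multiplied on the left by `X_j` gives `X_i(1 - X_jZ_j) = q_i^{A_ij}(1 - X_jZ_j)X_i`.
For `j = i` this says `X_i u = q_i^2 u X_i` with `u = 1 - X_iZ_i`, so `P_r = X_i^r Z_i^r` satisfies
`P_{r+1} = X_i^r (1 - u) Z_i^r = P_r - q_i^{2r} u P_r`, i.e. `P_r = ∏_{s<r} (1 - q_i^{2s} u)`.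
Multiplying an expansion of `u^m` in the `P_r` by `u` therefore telescopes, and the coefficients
of `u^{m+1}` come from those of `u^m` by the q-Pascal rule
`[m+1, r+1] = q^{-(r+1)} [m, r+1] + q^{m-r} [m, r]`.
-/

section QNumbers

variable {K : Type} [Field K] {di : ℕ}

lemma qi_ne_zero : qi K di ≠ 0 :=
  pow_ne_zero _ RatFunc.X_ne_zero

lemma intDegree_qi_zpow (N : ℤ) : (qi K di ^ N).intDegree = di * N := by
  have hX : ∀ k : ℕ, (RatFunc.X ^ k : RatFunc K).intDegree = k := fun k => by
    rw [← RatFunc.algebraMap_X, ← map_pow, RatFunc.intDegree_polynomial,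
      Polynomial.natDegree_X_pow]
  rw [qi, qv, ← zpow_natCast, ← zpow_mul]
  obtain ⟨k, hk | hk⟩ := Int.eq_nat_or_neg (di * N)
  · rw [hk, zpow_natCast, hX]
  · rw [hk, zpow_neg, zpow_natCast, RatFunc.intDegree_inv, hX]

lemma qi_zpow_ne_one (hd : 0 < di) {N : ℤ} (hN : N ≠ 0) : qi K di ^ N ≠ 1 := fun h => by
  have := intDegree_qi_zpow (K := K) (di := di) N
  rw [h, RatFunc.intDegree_one] at this
  exact hN ((mul_eq_zero.mp this.symm).resolve_left (by exact_mod_cast hd.ne'))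

lemma qi_zpow_sub_zpow_neg_ne_zero (hd : 0 < di) {N : ℤ} (hN : N ≠ 0) :
    qi K di ^ N - qi K di ^ (-N) ≠ 0 := by
  rw [sub_ne_zero, ne_eq, ← mul_inv_eq_one₀ (zpow_ne_zero _ qi_ne_zero), ← zpow_neg, neg_neg,
    ← zpow_add₀ qi_ne_zero]
  exact qi_zpow_ne_one hd (by omega)

lemma qnum_ne_zero (hd : 0 < di) {m : ℤ} (hm : m ≠ 0) : qnum K di m ≠ 0 := by
  have hden := qi_zpow_sub_zpow_neg_ne_zero (K := K) hd one_ne_zero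
  rw [zpow_one, zpow_neg_one] at hden
  exact div_ne_zero (qi_zpow_sub_zpow_neg_ne_zero hd hm) hden

lemma qnum_add (a b : ℤ) :
    qnum K di (a + b) = qi K di ^ (-a) * qnum K di b + qi K di ^ b * qnum K di a := by
  simp only [qnum, ← mul_div_assoc, ← add_div, zpow_add₀ (qi_ne_zero (K := K) (di := di)),
    zpow_neg]
  ring

lemma qfac_ne_zero (hd : 0 < di) (m : ℕ) : qfac K di m ≠ 0 := by
  induction m with
  | zero => exact one_ne_zero
  | succ m ih => exact mul_ne_zero (qnum_ne_zero hd (by omega)) ih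

lemma qbin_zero_right (hd : 0 < di) (m : ℕ) : qbin K di m 0 = 1 := by
  rw [qbin, Nat.sub_zero, qfac, one_mul, div_self (qfac_ne_zero hd m)]

lemma qbin_self (hd : 0 < di) (m : ℕ) : qbin K di m m = 1 := by
  rw [qbin, Nat.sub_self, qfac, mul_one, div_self (qfac_ne_zero hd m)]

lemma qbin_succ_succ (hd : 0 < di) {m r : ℕ} (h : r < m) :
    qbin K di (m + 1) (r + 1) =
      qi K di ^ (-((r : ℤ) + 1)) * qbin K di m (r + 1) +
        qi K di ^ ((m : ℤ) - r) * qbin K di m r := by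
  obtain ⟨k, rfl⟩ := Nat.exists_eq_add_of_lt h
  have hfac : ∀ j : ℕ, qfac K di (j + 1) = qnum K di (j + 1) * qfac K di j := fun _ => rfl
  have hnum : ∀ j : ℕ, qnum K di (j + 1) ≠ 0 := fun j => qnum_ne_zero hd (by omega)
  have := qfac_ne_zero (K := K) hd r
  have := qfac_ne_zero (K := K) hd k
  have := qfac_ne_zero (K := K) hd (r + k + 1)
  have := hnum r
  have := hnum k
  rw [qbin, qbin, qbin, show r + k + 1 + 1 - (r + 1) = k + 1 by omega,
    show r + k + 1 - (r + 1) = k by omega, show r + k + 1 - r = k + 1 by omega,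
    hfac (r + k + 1), hfac r, hfac k]
  push_cast
  rw [show (r : ℤ) + k + 1 + 1 = (r + 1) + (k + 1) by ring, qnum_add,
    show (r : ℤ) + k + 1 - r = k + 1 by ring]
  field_simp

end QNumbers

lemma Finset.sum_range_succ_smul_sub {F M : Type*} [Ring F] [AddCommGroup M] [Module F M]
    (a : ℕ → F) (P : ℕ → M) (n : ℕ) :
    ∑ r ∈ Finset.range (n + 1), a r • (P r - P (r + 1)) =
      a 0 • P 0 + ∑ r ∈ Finset.range n, (a (r + 1) - a r) • P (r + 1) -
        a n • P (n + 1) := by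
  induction n with
  | zero => simp [smul_sub]
  | succ n ih =>
    rw [Finset.sum_range_succ, ih, Finset.sum_range_succ]
    simp only [smul_sub, sub_smul]
    abel

section QNewton

variable {K : Type} [Field K] {di : ℕ}

variable (K di) in
/-- Coefficients of the expansion of `u ^ m` in the products `∏_{s<r} (1 - q_i^{2s} u)`. -/
noncomputable def qNewtonCoeff (m r : ℕ) : Kq K :=
  (-1) ^ r * qbin K di m r * qi K di ^ ((r : ℤ) * (1 - m))

lemma qNewtonCoeff_zero_right (hd : 0 < di) (m : ℕ) : qNewtonCoeff K di m 0 = 1 := by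
  simp [qNewtonCoeff, qbin_zero_right hd]

-- Kept apart from the Pascal rule: by truncated subtraction `qbin m (m + 1)` is `1/[m+1]`, not `0`.
lemma qNewtonCoeff_succ_self (hd : 0 < di) (m : ℕ) :
    qNewtonCoeff K di (m + 1) (m + 1) =
      -(qNewtonCoeff K di m m * qi K di ^ (-(2 * m : ℤ))) := by
  have hexp : qi K di ^ ((m : ℤ) * (1 - m)) * qi K di ^ (-(2 * m : ℤ)) =
      qi K di ^ (((m + 1 : ℕ) : ℤ) * (1 - (m + 1 : ℕ))) := by
    rw [← zpow_add₀ qi_ne_zero]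
    push_cast
    ring_nf
  simp only [qNewtonCoeff, qbin_self hd, ← hexp]
  ring

lemma qNewtonCoeff_succ_succ (hd : 0 < di) {m r : ℕ} (hr : r < m) :
    qNewtonCoeff K di (m + 1) (r + 1) =
      qNewtonCoeff K di m (r + 1) * qi K di ^ (-(2 * (r + 1 : ℕ) : ℤ)) -
        qNewtonCoeff K di m r * qi K di ^ (-(2 * r : ℤ)) := by
  set e : ℤ := ((r + 1 : ℕ) : ℤ) * (1 - (m + 1 : ℕ))
  have h1 : qi K di ^ (((r + 1 : ℕ) : ℤ) * (1 - m)) * qi K di ^ (-(2 * (r + 1 : ℕ) : ℤ)) =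
      qi K di ^ (-((r : ℤ) + 1)) * qi K di ^ e := by
    rw [← zpow_add₀ qi_ne_zero, ← zpow_add₀ qi_ne_zero]
    push_cast [e]
    ring_nf
  have h2 : qi K di ^ ((r : ℤ) * (1 - m)) * qi K di ^ (-(2 * r : ℤ)) =
      qi K di ^ ((m : ℤ) - r) * qi K di ^ e := by
    rw [← zpow_add₀ qi_ne_zero, ← zpow_add₀ qi_ne_zero]
    push_cast [e]
    ring_nf
  simp only [qNewtonCoeff]
  linear_combination (-1) ^ (r + 1) * qi K di ^ e * qbin_succ_succ (K := K) hd hr -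
    (-1) ^ (r + 1) * qbin K di m (r + 1) * h1 + (-1) ^ r * qbin K di m r * h2

lemma pow_eq_sum_qNewtonCoeff_smul {R : Type*} [Ring R] [Algebra (Kq K) R] (hd : 0 < di)
    {u : R} {P : ℕ → R} (hP0 : P 0 = 1)
    (hP : ∀ r : ℕ, P (r + 1) = P r - qi K di ^ (2 * r : ℤ) • (u * P r)) (m : ℕ) :
    u ^ m = ∑ r ∈ Finset.range (m + 1), qNewtonCoeff K di m r • P r := by
  induction m with
  | zero => simp [hP0, qNewtonCoeff_zero_right hd]
  | succ m ih =>
    have hu (r : ℕ) : u * P r = qi K di ^ (-(2 * r : ℤ)) • (P r - P (r + 1)) := by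
      rw [hP r, sub_sub_cancel, smul_smul, ← zpow_add₀ qi_ne_zero, neg_add_cancel, zpow_zero,
        one_smul]
    calc u ^ (m + 1)
        = ∑ r ∈ Finset.range (m + 1),
            (qNewtonCoeff K di m r * qi K di ^ (-(2 * r : ℤ))) • (P r - P (r + 1)) := by
          rw [pow_succ', ih, Finset.mul_sum]
          refine Finset.sum_congr rfl fun r _ => ?_
          rw [mul_smul_comm, hu, smul_smul]
      _ = ∑ r ∈ Finset.range (m + 1 + 1), qNewtonCoeff K di (m + 1) r • P r := by
          rw [Finset.sum_range_succ_smul_sub, Finset.sum_range_succ' _ (m + 1),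
            Finset.sum_range_succ, qNewtonCoeff_succ_self hd, qNewtonCoeff_zero_right hd,
            qNewtonCoeff_zero_right hd]
          rw [Finset.sum_congr rfl fun r hr =>
            by rw [← qNewtonCoeff_succ_succ hd (Finset.mem_range.mp hr)]]
          simp only [Nat.cast_zero, mul_zero, neg_zero, zpow_zero, mul_one, neg_smul]
          abel

end QNewton

section TwistedCommutation

variable {F R : Type*} [CommRing F] [Ring R] [Algebra F R]

lemma mul_one_sub_mul_eq_smul {x y y' z : R} {c : F} (hxy : Commute x y) (hy : y * y' = 1)
    (h : x * z - c • (z * x) = (1 - c) • (x * y')) :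
    x * (1 - y * z) = c • ((1 - y * z) * x) := by
  have hxz : x * z = (1 - c) • (x * y') + c • (z * x) := sub_eq_iff_eq_add.mp h
  have hyx : y * (x * y') = x := by rw [← mul_assoc, ← hxy.eq, mul_assoc, hy, mul_one]
  calc x * (1 - y * z)
      = x - y * (x * z) := by rw [mul_sub, mul_one, ← mul_assoc, hxy.eq, mul_assoc]
    _ = x - ((1 - c) • x + c • (y * z * x)) := by
        rw [hxz, mul_add, mul_smul_comm, mul_smul_comm, hyx, mul_assoc]
    _ = c • ((1 - y * z) * x) := by
        rw [sub_mul, one_mul, smul_sub, sub_smul, one_smul]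
        abel

lemma pow_mul_eq_smul_mul_pow {x u : R} {c : F} (h : x * u = c • (u * x)) (r : ℕ) :
    x ^ r * u = c ^ r • (u * x ^ r) := by
  induction r with
  | zero => simp
  | succ r ih =>
    rw [pow_succ, mul_assoc, h, mul_smul_comm, ← mul_assoc, ih, smul_mul_assoc, smul_smul,
      mul_assoc, ← pow_succ, ← pow_succ']

lemma pow_succ_mul_pow_succ {x z : R} {c : F} (h : x * (1 - x * z) = c • ((1 - x * z) * x))
    (r : ℕ) :
    x ^ (r + 1) * z ^ (r + 1) = x ^ r * z ^ r - c ^ r • ((1 - x * z) * (x ^ r * z ^ r)) :=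
  calc x ^ (r + 1) * z ^ (r + 1)
      = x ^ r * (1 - (1 - x * z)) * z ^ r := by
        rw [sub_sub_cancel, pow_succ, pow_succ', mul_assoc, mul_assoc, mul_assoc]
    _ = x ^ r * z ^ r - x ^ r * (1 - x * z) * z ^ r := by rw [mul_sub, mul_one, sub_mul]
    _ = x ^ r * z ^ r - c ^ r • ((1 - x * z) * (x ^ r * z ^ r)) := by
        rw [pow_mul_eq_smul_mul_pow h, smul_mul_assoc, mul_assoc]

end TwistedCommutation

section EquitableRelations

variable {K : Type} [Field K] {n : ℕ} (A : Matrix (Fin n) (Fin n) ℤ) (d : Fin n → ℕ)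

lemma genX_mul_genXinv (i : Fin n) : genX K A d i * genXinv K A d i = 1 := by
  simpa only [genX, genXinv, map_mul, map_one] using
    RingQuot.mkAlgHom_rel (Kq K) (ERel.E1a (K := K) (A := A) (d := d) i)

lemma genX_commute (i j : Fin n) : Commute (genX K A d i) (genX K A d j) := by
  rw [commute_iff_eq]
  simpa only [genX, map_mul] using
    RingQuot.mkAlgHom_rel (Kq K) (ERel.E2 (K := K) (A := A) (d := d) i j)

lemma genX_mul_genZ_sub_smul (i j : Fin n) :
    genX K A d i * genZ K A d j - qi K (d i) ^ (A i j) • (genZ K A d j * genX K A d i) =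
      (1 - qi K (d i) ^ (A i j)) • (genX K A d i * genXinv K A d j) := by
  simpa only [genX, genZ, genXinv, map_mul, map_sub, map_smul] using
    RingQuot.mkAlgHom_rel (Kq K) (ERel.E4 (K := K) (A := A) (d := d) i j)

end EquitableRelations

/-- In the equitable algebra `U`:
`X_i(1 - X_jZ_j) = q_i^{A_ij}(1 - X_jZ_j)X_i` for all `i, j`, and
`(1 - X_iZ_i)^m = Σ_{r=0}^{m} (-1)^r [m choose r]_i q_i^{r(1-m)} X_i^r Z_i^r`
for all `i` and `m ≥ 0`. -/
theorem equitable_XZ_commutation_and_power (K : Type) [Field K] {n : ℕ}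
    (A : Matrix (Fin n) (Fin n) ℤ) (d : Fin n → ℕ) (hA : IsSymmetrizableGCM A d) :
    (∀ i j : Fin n, genX K A d i * (1 - genX K A d j * genZ K A d j) =
      qi K (d i) ^ (A i j) • ((1 - genX K A d j * genZ K A d j) * genX K A d i)) ∧
    (∀ (i : Fin n) (m : ℕ), (1 - genX K A d i * genZ K A d i) ^ m =
      ∑ r ∈ Finset.range (m + 1),
        ((-1 : Kq K) ^ r * qbin K (d i) m r * qi K (d i) ^ ((r : ℤ) * (1 - (m : ℤ)))) •
          (genX K A d i ^ r * genZ K A d i ^ r)) := by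
  obtain ⟨-, hAii, -, hd, -, -⟩ := hA
  have commutation (i j : Fin n) : genX K A d i * (1 - genX K A d j * genZ K A d j) =
      qi K (d i) ^ (A i j) • ((1 - genX K A d j * genZ K A d j) * genX K A d i) :=
    mul_one_sub_mul_eq_smul (genX_commute A d i j) (genX_mul_genXinv A d j)
      (genX_mul_genZ_sub_smul A d i j)
  refine ⟨commutation, fun i m => ?_⟩
  refine pow_eq_sum_qNewtonCoeff_smul (hd i)
    (P := fun r => genX K A d i ^ r * genZ K A d i ^ r) (by simp) (fun r => ?_) m
  rw [pow_succ_mul_pow_succ (commutation i i), hAii, ← zpow_natCast, ← zpow_mul]
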